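/- The 3-graph F_1 (vertices {a,b,c,d,e,f,g}, edges {abe, ace, bce, abf, adf, bdf, cdg}) is 4-partite, and F_1 is a subgraph of some blow-up of J_4 but is not a subgraph of any blow-up of K_4^{3-}. -/
import Mathlib


/-- The 3-graph `F_1` on vertex set `Fin 7` with `(a,b,c,d,e,f,g) = (0,...,6)`:
edges `{abe, ace, bce, abf, adf, bdf, cdg}`. -/
def F1 : Finset (Finset (Fin 7)) :=
  {{0, 1, 4}, {0, 2, 4}, {1, 2, 4}, {0, 1, 5}, {0, 3, 5}, {1, 3, 5}, {2, 3, 6}}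

/-- `K_4^{3-}` on `Fin 4`: edges `{123, 124, 134}` (all containing vertex `0`). -/
def K43minus : Finset (Finset (Fin 4)) := {{0, 1, 2}, {0, 1, 3}, {0, 2, 3}}

lemma aux1 : ∀ x y z u : Fin 4,
    (({x, y, u} : Finset (Fin 4)).card = 3 ∧ {x, y, u} ∈ K43minus) →
    (({x, z, u} : Finset (Fin 4)).card = 3 ∧ {x, z, u} ∈ K43minus) →
    (({y, z, u} : Finset (Fin 4)).card = 3 ∧ {y, z, u} ∈ K43minus) →
    u = 0 ∧ ({x, y, z} : Finset (Fin 4)) = {1, 2, 3} := by decide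

lemma aux2 : ∀ x y z w : Fin 4,
    ({x, y, z} : Finset (Fin 4)) = {1, 2, 3} → ({x, y, w} : Finset (Fin 4)) = {1, 2, 3} →
    z = w := by decide

lemma aux3 : ∀ z w : Fin 4, ({z, z, w} : Finset (Fin 4)).card = 3 → False := by decide

set_option maxRecDepth 20000 in
/-- `F_1` is 4-partite; `F_1` is a subgraph of some blow-up of `J_4`
(equivalently there is a map of its vertices to the vertices of `J_4`, injective on
each edge, sending each edge to an edge of `J_4`, i.e. a rainbow triple of classes
containing the universal class `0`); and `F_1` is not a subgraph of any blow-up of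
`K_4^{3-}` (no such map to `K_4^{3-}` exists). -/
theorem stmt_10 :
    (∃ p : Fin 7 → Fin 4, ∀ e ∈ F1, ∀ x ∈ e, ∀ y ∈ e, x ≠ y → p x ≠ p y) ∧
    (∃ c : Fin 7 → Fin 5, ∀ e ∈ F1, (e.image c).card = 3 ∧ (0 : Fin 5) ∈ e.image c) ∧
    (¬ ∃ c : Fin 7 → Fin 4, ∀ e ∈ F1, (e.image c).card = 3 ∧ e.image c ∈ K43minus) := by
  refine ⟨⟨![0,1,2,3,3,2,0], by decide⟩, ⟨![1,2,3,4,0,0,0], by decide⟩, ?_⟩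
  rintro ⟨c, hc⟩
  have h1 := hc {0, 1, 4} (by decide)
  have h2 := hc {0, 2, 4} (by decide)
  have h3 := hc {1, 2, 4} (by decide)
  have h4 := hc {0, 1, 5} (by decide)
  have h5 := hc {0, 3, 5} (by decide)
  have h6 := hc {1, 3, 5} (by decide)
  have h7 := hc {2, 3, 6} (by decide)
  simp only [Finset.image_insert, Finset.image_singleton] at h1 h2 h3 h4 h5 h6 h7
  have e4 := aux1 (c 0) (c 1) (c 2) (c 4) h1 h2 h3
  have e5 := aux1 (c 0) (c 1) (c 3) (c 5) h4 h5 h6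
  have e23 : c 2 = c 3 := aux2 (c 0) (c 1) (c 2) (c 3) e4.2 e5.2
  rw [e23] at h7
  exact aux3 (c 3) (c 6) h7.1
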